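/- arXiv:1102.3637 — 7 statements merged into one kernel-verified Lean document; each statement's English description precedes it below -/
import Mathlib

section
/- Let N ≥ 2 be an integer and let d₁ ≤ d₂ ≤ … ≤ d_{N+1} be positive integers satisfying d₁ + d₂ + … + d_N ≥ (N−1)·d_{N+1}. Then for every integer i with 1 ≤ i ≤ N−1 one has N·(d₁ + … + d_{i+1}) ≥ i·(d₁ + … + d_{N+1}) (equivalently, (N−i)·(d₁ + … + d_{i+1}) ≥ i·(d_{i+2} + … + d_{N+1})). -/
/-!
Every term is at most `c = d (N+1)`, so the tail `d (i+2) + ⋯ + d (N+1)` is at most `(N-i)·c`,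
while the hypothesis `d 1 + ⋯ + d N ≥ (N-1)·c` survives truncation to the prefix
`d 1 + ⋯ + d (i+1) ≥ i·c`, because the discarded terms are again at most `c` each.
Comparing these two bounds through `c` gives `i·tail ≤ (N-i)·prefix`; adding `i·prefix`
to both sides gives the other form.
-/

open Finset

section

variable {R : Type*} [CommRing R] [LinearOrder R] [IsStrictOrderedRing R]

theorem sum_Ioc_le_mul_of_le {f : ℕ → R} {c : R} {m n : ℕ} (hmn : m ≤ n)
    (h : ∀ k ∈ Ioc m n, f k ≤ c) : ∑ k ∈ Ioc m n, f k ≤ ((n : R) - m) * c := by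
  calc ∑ k ∈ Ioc m n, f k ≤ #(Ioc m n) • c := sum_le_card_nsmul _ _ _ h
    _ = ((n : R) - m) * c := by rw [Nat.card_Ioc, nsmul_eq_mul, Nat.cast_sub hmn]

theorem sub_one_mul_le_sum_Ioc_of_le {f : ℕ → R} {c : R} {m n : ℕ} (hmn : m ≤ n)
    (h : ∀ k ∈ Ioc m n, f k ≤ c) (hsum : ((n : R) - 1) * c ≤ ∑ k ∈ Ioc 0 n, f k) :
    ((m : R) - 1) * c ≤ ∑ k ∈ Ioc 0 m, f k := by
  have hsplit := sum_Ioc_consecutive f (Nat.zero_le m) hmn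
  have htail := sum_Ioc_le_mul_of_le hmn h
  linarith

theorem mul_le_mul_of_le_mul_of_mul_le {a b c p q : R} (hp : 0 ≤ p) (hq : 0 ≤ q)
    (ha : a ≤ q * c) (hb : p * c ≤ b) : p * a ≤ q * b :=
  calc p * a ≤ p * (q * c) := mul_le_mul_of_nonneg_left ha hp
    _ = q * (p * c) := by ring
    _ ≤ q * b := mul_le_mul_of_nonneg_left hb hq

end

theorem stmt0_general (N : ℕ) (d : ℕ → ℤ)
    (hmono : ∀ j k, 1 ≤ j → j ≤ k → k ≤ N + 1 → d j ≤ d k)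
    (hsum : ((N : ℤ) - 1) * d (N + 1) ≤ ∑ k ∈ Finset.Icc 1 N, d k) :
    ∀ i : ℕ, 1 ≤ i → i ≤ N - 1 →
      (i : ℤ) * ∑ k ∈ Finset.Icc 1 (N + 1), d k ≤
        (N : ℤ) * ∑ k ∈ Finset.Icc 1 (i + 1), d k ∧
      (i : ℤ) * ∑ k ∈ Finset.Icc (i + 2) (N + 1), d k ≤
        ((N : ℤ) - (i : ℤ)) * ∑ k ∈ Finset.Icc 1 (i + 1), d k := by
  intro i hi hiN
  have hIcc : ∀ n, Icc 1 n = Ioc 0 n := Icc_add_one_left_eq_Ioc 0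
  have hIcc_tail : Icc (i + 2) (N + 1) = Ioc (i + 1) (N + 1) := Icc_add_one_left_eq_Ioc _ _
  rw [hIcc] at hsum
  rw [hIcc, hIcc, hIcc_tail]
  have hle_last : ∀ m, ∀ k ∈ Ioc m (N + 1), d k ≤ d (N + 1) := fun m k hk =>
    hmono k (N + 1) (Nat.one_le_of_lt (mem_Ioc.1 hk).1) (mem_Ioc.1 hk).2 le_rfl
  have hprefix : (i : ℤ) * d (N + 1) ≤ ∑ k ∈ Ioc 0 (i + 1), d k := by
    simpa using sub_one_mul_le_sum_Ioc_of_le (by omega)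
      (fun k hk => hle_last (i + 1) k (Ioc_subset_Ioc_right (by omega) hk)) hsum
  have htail : ∑ k ∈ Ioc (i + 1) (N + 1), d k ≤ ((N : ℤ) - i) * d (N + 1) := by
    simpa using sum_Ioc_le_mul_of_le (by omega) (hle_last (i + 1))
  have hkey : (i : ℤ) * ∑ k ∈ Ioc (i + 1) (N + 1), d k ≤
      ((N : ℤ) - i) * ∑ k ∈ Ioc 0 (i + 1), d k :=
    mul_le_mul_of_le_mul_of_mul_le (by positivity) (by omega) htail hprefix
  refine ⟨?_, hkey⟩
  rw [← sum_Ioc_consecutive d (Nat.zero_le (i + 1)) (by omega : i + 1 ≤ N + 1)]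
  linarith

/--
Let `N ≥ 2` and let `d 1 ≤ d 2 ≤ … ≤ d (N+1)` be positive integers satisfying
`d 1 + ⋯ + d N ≥ (N−1) · d (N+1)`. Then for every `i` with `1 ≤ i ≤ N−1` one has
`N·(d 1 + ⋯ + d (i+1)) ≥ i·(d 1 + ⋯ + d (N+1))`, equivalently
`(N−i)·(d 1 + ⋯ + d (i+1)) ≥ i·(d (i+2) + ⋯ + d (N+1))`.
-/
theorem stmt0 (N : ℕ) (hN : 2 ≤ N) (d : ℕ → ℤ)
    (hpos : ∀ k, 1 ≤ k → k ≤ N + 1 → 0 < d k)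
    (hmono : ∀ j k, 1 ≤ j → j ≤ k → k ≤ N + 1 → d j ≤ d k)
    (hsum : ((N : ℤ) - 1) * d (N + 1) ≤ ∑ k ∈ Finset.Icc 1 N, d k) :
    ∀ i : ℕ, 1 ≤ i → i ≤ N - 1 →
      (i : ℤ) * ∑ k ∈ Finset.Icc 1 (N + 1), d k ≤
        (N : ℤ) * ∑ k ∈ Finset.Icc 1 (i + 1), d k ∧
      (i : ℤ) * ∑ k ∈ Finset.Icc (i + 2) (N + 1), d k ≤
        ((N : ℤ) - (i : ℤ)) * ∑ k ∈ Finset.Icc 1 (i + 1), d k :=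
  stmt0_general N d hmono hsum
end

section
/- Let N ≥ 2 be an integer and let d₁ ≤ d₂ ≤ … ≤ d_{N+1} be positive integers satisfying the strict inequality d₁ + d₂ + … + d_N > (N−1)·d_{N+1}. Then for every integer i with 1 ≤ i ≤ N−1 one has the strict inequality N·(d₁ + … + d_{i+1}) > i·(d₁ + … + d_{N+1}). -/
/-!
Write `D = d (N+1)`, `A = d 1 + ⋯ + d (i+1)` and `S = d 1 + ⋯ + d (N+1)`. Every term after
`d (i+1)` is at most `D`, so the hypothesis `(N-1) D < d 1 + ⋯ + d N ≤ A + (N-i-1) D` gives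
`i D < A`, and then `i S ≤ i A + i (N-i) D < i A + (N-i) A = N A`.
-/

open Finset

theorem sum_Icc_one_le_add_mul {R : Type*} [Ring R] [PartialOrder R] [IsOrderedAddMonoid R]
    (f : ℕ → R) {m n : ℕ} {M : R} (hmn : m ≤ n) (hf : ∀ k ∈ Ioc m n, f k ≤ M) :
    ∑ k ∈ Icc 1 n, f k ≤ ∑ k ∈ Icc 1 m, f k + ((n : R) - m) * M := by
  have htail : ∑ k ∈ Ioc m n, f k ≤ ((n : R) - m) * M := by
    simpa [Nat.card_Ioc, Nat.cast_sub hmn, nsmul_eq_mul] using sum_le_card_nsmul _ _ _ hf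
  have hIcc (b : ℕ) : Icc 1 b = Ioc 0 b := Icc_add_one_left_eq_Ioc 0 b
  rw [hIcc, hIcc, ← sum_Ioc_consecutive f (Nat.zero_le m) hmn]
  exact add_le_add_right htail _

theorem stmt1_general (N : ℕ) (d : ℕ → ℤ)
    (hmono : ∀ j k, 1 ≤ j → j ≤ k → k ≤ N + 1 → d j ≤ d k)
    (hsum : ((N : ℤ) - 1) * d (N + 1) < ∑ k ∈ Finset.Icc 1 N, d k) :
    ∀ i : ℕ, 1 ≤ i → i ≤ N - 1 →
      (i : ℤ) * ∑ k ∈ Finset.Icc 1 (N + 1), d k <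
        (N : ℤ) * ∑ k ∈ Finset.Icc 1 (i + 1), d k := by
  intro i hi hiN
  have hlt : i < N := by omega
  have hle_last : ∀ n ≤ N + 1, ∀ k ∈ Ioc (i + 1) n, d k ≤ d (N + 1) := by
    intro n hn k hk
    obtain ⟨hik, hkn⟩ := mem_Ioc.1 hk
    exact hmono k (N + 1) (by omega) (by omega) le_rfl
  set A := ∑ k ∈ Icc 1 (i + 1), d k
  set D := d (N + 1)
  have hfirst : ∑ k ∈ Icc 1 N, d k ≤ A + ((N : ℤ) - (i + 1 : ℕ)) * D :=
    sum_Icc_one_le_add_mul d hlt (hle_last N (by omega))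
  have hall : ∑ k ∈ Icc 1 (N + 1), d k ≤ A + ((N + 1 : ℕ) - (i + 1 : ℕ) : ℤ) * D :=
    sum_Icc_one_le_add_mul d (by omega) (hle_last (N + 1) le_rfl)
  push_cast at hfirst hall
  have hA : (i : ℤ) * D < A := by linarith
  have hNi : (0 : ℤ) < N - i := by omega
  calc (i : ℤ) * ∑ k ∈ Icc 1 (N + 1), d k
      ≤ i * (A + (N - i) * D) := by gcongr; linarith
    _ = i * A + (N - i) * (i * D) := by ring
    _ < i * A + (N - i) * A := by gcongr
    _ = N * A := by ring

/--
Let `N ≥ 2` and let `d 1 ≤ d 2 ≤ … ≤ d (N+1)` be positive integers satisfying the strict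
inequality `d 1 + ⋯ + d N > (N−1) · d (N+1)`. Then for every `i` with `1 ≤ i ≤ N−1` one has
the strict inequality `N·(d 1 + ⋯ + d (i+1)) > i·(d 1 + ⋯ + d (N+1))`.
-/
theorem stmt1 (N : ℕ) (hN : 2 ≤ N) (d : ℕ → ℤ)
    (hpos : ∀ k, 1 ≤ k → k ≤ N + 1 → 0 < d k)
    (hmono : ∀ j k, 1 ≤ j → j ≤ k → k ≤ N + 1 → d j ≤ d k)
    (hsum : ((N : ℤ) - 1) * d (N + 1) < ∑ k ∈ Finset.Icc 1 N, d k) :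
    ∀ i : ℕ, 1 ≤ i → i ≤ N - 1 →
      (i : ℤ) * ∑ k ∈ Finset.Icc 1 (N + 1), d k <
        (N : ℤ) * ∑ k ∈ Finset.Icc 1 (i + 1), d k :=
  stmt1_general N d hmono hsum
end

section
/- Let R be a commutative ring and let 0 → E → F →^φ G → 0 be a split short exact sequence of R-modules. Then for every integer q ≥ 1 the induced map E^{⊗q} → F^{⊗q} on q-fold tensor powers is injective, and its image equals the intersection over p = 1, …, q of the kernels of the maps id_F^{⊗(p−1)} ⊗ φ ⊗ id_F^{⊗(q−p)} : F^{⊗q} → F^{⊗(p−1)} ⊗ G ⊗ F^{⊗(q−p)}. Equivalently, the sequence 0 → E^{⊗q} → F^{⊗q} → ⊕_{p=1}^{q} F^{⊗(p−1)} ⊗ G ⊗ F^{⊗(q−p)} is exact, where the p-th component of the last map applies φ in the p-th tensor factor. -/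
/-!
The splitting provides a retraction `r` of `i` and a section `s` of `φ` with
`i ∘ r + s ∘ φ = id`, so `r^{⊗q}` is a left inverse of `i^{⊗q}`. Applying `id - i ∘ r = s ∘ φ`
in the `p`-th factor only (identity elsewhere) factors through `ψ p`, so it kills every `x` in the
intersection of the kernels. Hence replacing the factors `id` by `i ∘ r` one at a time never
changes such an `x`, and `x = (i ∘ r)^{⊗q} x` lies in the image of `i^{⊗q}`.
-/

open scoped TensorProduct
open PiTensorProduct Function

theorem Function.Exact.exists_retraction_and_section_of_isCompl {R E F G : Type*} [Ring R]
    [AddCommGroup E] [AddCommGroup F] [AddCommGroup G] [Module R E] [Module R F] [Module R G]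
    {i : E →ₗ[R] F} {φ : F →ₗ[R] G} (h : Exact i φ) (hinj : Injective i)
    (hsurj : Surjective φ) {C : Submodule R F} (hC : IsCompl (LinearMap.range i) C) :
    ∃ (r : F →ₗ[R] E) (s : G →ₗ[R] F),
      r ∘ₗ i = LinearMap.id ∧ i ∘ₗ r + s ∘ₗ φ = LinearMap.id := by
  have hretr : ∃ r : F →ₗ[R] E, r ∘ₗ i = LinearMap.id :=
    ⟨LinearMap.linearProjOfIsCompl C i hinj hC, LinearMap.ext fun x => by simp⟩
  have htfae := h.split_tfae'.out 1 2
  obtain ⟨e, rfl, rfl⟩ := htfae.mp ⟨hsurj, hretr⟩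
  refine ⟨LinearMap.fst R E G ∘ₗ e, e.symm ∘ₗ LinearMap.inr R E G, ?_, ?_⟩
  · ext x; simp
  · ext x
    apply e.injective
    ext <;> simp

theorem PiTensorProduct.map_update_comp {R M ι : Type*} [CommSemiring R] [AddCommMonoid M]
    [Module R M] [DecidableEq ι] (f : ι → M →ₗ[R] M) (p : ι) (u : M →ₗ[R] M) :
    map (update f p (f p ∘ₗ u)) = map f ∘ₗ map (update (fun _ => LinearMap.id) p u) := by
  rw [← map_comp]
  congr 1
  funext j
  rcases eq_or_ne j p with rfl | hj <;> simp [*]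

theorem PiTensorProduct.map_const_apply_eq_self_of_map_update_sub {R M ι : Type*} [CommRing R]
    [AddCommGroup M] [Module R M] [DecidableEq ι] [Fintype ι] (P : M →ₗ[R] M)
    (x : ⨂[R] _ : ι, M)
    (hx : ∀ p, map (update (fun _ => LinearMap.id) p (LinearMap.id - P)) x = 0) :
    map (fun _ => P) x = x := by
  suffices ∀ S : Finset ι, map (fun j => if j ∈ S then P else LinearMap.id) x = x by
    simpa using this Finset.univ
  intro S
  induction S using Finset.induction_on with
  | empty => simp
  | insert a S ha ih =>
    set f : ι → M →ₗ[R] M := fun j => if j ∈ S then P else LinearMap.id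
    have hfa : f a = LinearMap.id := if_neg ha
    have hinsert : (fun j => if j ∈ insert a S then P else LinearMap.id) = update f a P := by
      funext j
      rcases eq_or_ne j a with rfl | hj <;> simp [f, *]
    have hsub : map f - map (update f a P) =
        map f ∘ₗ map (update (fun _ => LinearMap.id) a (LinearMap.id - P)) := by
      rw [← map_update_comp, hfa, LinearMap.id_comp, eq_comm, eq_sub_iff_add_eq,
        ← PiTensorProduct.map_update_add, sub_add_cancel, ← hfa, update_eq_self]
    have hstep := LinearMap.congr_fun hsub x
    simp only [LinearMap.sub_apply, LinearMap.comp_apply, hx, map_zero, sub_eq_zero] at hstep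
    rw [hinsert, ← hstep, ih]

def finSplitAtEquiv (n : ℕ) (p : Fin (n + 1)) : Fin p ⊕ (Fin 1 ⊕ Fin (n - p)) ≃ Fin (n + 1) :=
  ((Equiv.sumCongr (Equiv.refl _) finSumFinEquiv).trans finSumFinEquiv).trans
    (finCongr (by omega))

section

variable {n : ℕ} {p : Fin (n + 1)}

@[simp]
theorem finSplitAtEquiv_inl (k : Fin p) :
    finSplitAtEquiv n p (.inl k) = ⟨k, k.2.trans p.2⟩ := by
  ext; simp [finSplitAtEquiv]

@[simp]
theorem finSplitAtEquiv_inr_inl (z : Fin 1) : finSplitAtEquiv n p (.inr (.inl z)) = p := by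
  ext; simp [finSplitAtEquiv, Fin.fin_one_eq_zero z]

@[simp]
theorem finSplitAtEquiv_inr_inr (k : Fin (n - p)) :
    finSplitAtEquiv n p (.inr (.inr k)) = ⟨p + 1 + k, by omega⟩ := by
  ext; simp [finSplitAtEquiv]; omega

end

section

variable (R : Type*) {M : Type*} [CommSemiring R] [AddCommMonoid M] [Module R M]

noncomputable def PiTensorProduct.insertAtEquiv (n : ℕ) (p : Fin (n + 1)) :
    (⨂[R]^(p : ℕ) M) ⊗[R] (M ⊗[R] ⨂[R]^(n - (p : ℕ)) M) ≃ₗ[R] ⨂[R]^(n + 1) M :=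
  TensorProduct.congr (.refl R _)
      (TensorProduct.congr (subsingletonEquiv (s := fun _ : Fin 1 => M) 0).symm (.refl R _) ≪≫ₗ
        tmulEquiv R M) ≪≫ₗ
    tmulEquiv R M ≪≫ₗ reindex R (fun _ => M) (finSplitAtEquiv n p)

variable {R}

theorem PiTensorProduct.insertAtEquiv_tmul {n : ℕ} (p : Fin (n + 1)) (v : Fin (n + 1) → M)
    (a : M) :
    insertAtEquiv R n p
      (tprod R (fun j : Fin p => v ⟨j, j.2.trans p.2⟩) ⊗ₜ[R]
        (a ⊗ₜ[R] tprod R (fun j : Fin (n - p) => v ⟨p + 1 + j, by omega⟩))) =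
      tprod R (update v p a) := by
  simp only [insertAtEquiv, LinearEquiv.trans_apply, TensorProduct.congr_tmul,
    LinearEquiv.refl_apply, subsingletonEquiv_symm_apply', tmulEquiv_apply, reindex_tprod]
  congr 1
  funext j
  obtain ⟨y, rfl⟩ := (finSplitAtEquiv n p).surjective j
  rw [Equiv.symm_apply_apply]
  rcases y with k | z | k
  · simp [Fin.ext_iff, k.2.ne]
  · simp
  · simp [update_apply, Fin.ext_iff]
    omega

theorem PiTensorProduct.map_update_comp_eq_insertAtEquiv_comp {G : Type*} [AddCommMonoid G]
    [Module R G] {n : ℕ} (p : Fin (n + 1)) (φ : M →ₗ[R] G) (g : G →ₗ[R] M)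
    (ψp : (⨂[R]^(n + 1) M) →ₗ[R] (⨂[R]^(p : ℕ) M) ⊗[R] (G ⊗[R] ⨂[R]^(n - (p : ℕ)) M))
    (hψp : ∀ v : Fin (n + 1) → M,
      ψp (tprod R v) =
        tprod R (fun j : Fin p => v ⟨j, j.2.trans p.2⟩) ⊗ₜ[R]
          (φ (v p) ⊗ₜ[R] tprod R (fun j : Fin (n - p) => v ⟨p + 1 + j, by omega⟩))) :
    map (update (fun _ => LinearMap.id) p (g ∘ₗ φ)) =
      (insertAtEquiv R n p).toLinearMap ∘ₗ
        TensorProduct.map LinearMap.id (TensorProduct.map g LinearMap.id) ∘ₗ ψp := by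
  ext v
  simp only [LinearMap.compMultilinearMap_apply, LinearMap.comp_apply, map_tprod, hψp,
    TensorProduct.map_tmul, LinearMap.id_apply, LinearEquiv.coe_coe, insertAtEquiv_tmul]
  congr 1
  funext j
  rcases eq_or_ne j p with rfl | hj <;> simp [*]

end

/--
Let `0 → E → F →^φ G → 0` be a split short exact sequence of `R`-modules. Then for
every `q = n+1 ≥ 1` the induced map `E^{⊗q} → F^{⊗q}` on `q`-fold tensor powers is
injective and its image equals the intersection over `p` of the kernels of the maps
`id^{⊗p} ⊗ φ ⊗ id^{⊗(q−1−p)} : F^{⊗q} → F^{⊗p} ⊗ (G ⊗ F^{⊗(q−1−p)})` (here `p` is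
zero-indexed, `ψ p` being the map applying `φ` in the `p`-th tensor factor).
-/
theorem stmt4 {R E F G : Type*} [CommRing R]
    [AddCommGroup E] [AddCommGroup F] [AddCommGroup G]
    [Module R E] [Module R F] [Module R G]
    (i : E →ₗ[R] F) (φ : F →ₗ[R] G)
    (hinj : Function.Injective i) (hsurj : Function.Surjective φ)
    (hexact : LinearMap.range i = LinearMap.ker φ)
    (hsplit : ∃ C : Submodule R F, IsCompl (LinearMap.range i) C)
    (n : ℕ)
    (ψ : (p : Fin (n + 1)) →
      (⨂[R]^(n + 1) F) →ₗ[R] (⨂[R]^(p : ℕ) F) ⊗[R] (G ⊗[R] ⨂[R]^(n - (p : ℕ)) F))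
    (hψ : ∀ (p : Fin (n + 1)) (v : Fin (n + 1) → F),
      ψ p (PiTensorProduct.tprod R v) =
        (PiTensorProduct.tprod R (fun j : Fin (p : ℕ) => v ⟨j.1, j.2.trans p.2⟩)) ⊗ₜ[R]
          (φ (v p) ⊗ₜ[R]
            PiTensorProduct.tprod R
              (fun j : Fin (n - (p : ℕ)) =>
                v ⟨p.1 + 1 + j.1, by have h1 := j.2; have h2 := p.2; omega⟩))) :
    Function.Injective
        (PiTensorProduct.map (fun _ : Fin (n + 1) => i) :
          (⨂[R]^(n + 1) E) →ₗ[R] ⨂[R]^(n + 1) F) ∧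
      LinearMap.range
          (PiTensorProduct.map (fun _ : Fin (n + 1) => i) :
            (⨂[R]^(n + 1) E) →ₗ[R] ⨂[R]^(n + 1) F) =
        ⨅ p : Fin (n + 1), LinearMap.ker (ψ p) := by
  have hex : Function.Exact i φ := LinearMap.exact_iff.mpr hexact.symm
  obtain ⟨C, hC⟩ := hsplit
  obtain ⟨r, s, hri, hsum⟩ := hex.exists_retraction_and_section_of_isCompl hinj hsurj hC
  refine ⟨?_, le_antisymm ?_ fun x hx => ?_⟩
  · refine LeftInverse.injective (g := map fun _ => r) fun y => ?_
    rw [← LinearMap.comp_apply, ← map_comp, hri, map_id, LinearMap.id_apply]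
  · rintro _ ⟨y, rfl⟩
    refine Submodule.mem_iInf _ |>.mpr fun p => ?_
    suffices ψ p ∘ₗ map (fun _ => i) = 0 from LinearMap.congr_fun this y
    ext v
    simp [hψ, hex.apply_apply_eq_zero]
  · have hkill (p : Fin (n + 1)) :
        map (update (fun _ => LinearMap.id) p (LinearMap.id - i ∘ₗ r)) x = 0 := by
      rw [← eq_sub_of_add_eq' hsum, map_update_comp_eq_insertAtEquiv_comp p φ s (ψ p) (hψ p)]
      simp [LinearMap.mem_ker.mp ((Submodule.mem_iInf _).mp hx p)]
    refine ⟨map (fun _ => r) x, ?_⟩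
    rw [← LinearMap.comp_apply, ← map_comp, map_const_apply_eq_self_of_map_update_sub _ x hkill]
end

section
/- Let R be a commutative ring containing the field ℚ and let 0 → E → F →^φ G → 0 be a split short exact sequence of R-modules. For an integer q ≥ 1, let d : S^q F → G ⊗ S^{q−1} F be the R-linear map determined by d(f₁·f₂·…·f_q) = Σ_{k=1}^{q} φ(f_k) ⊗ (f₁·…·f̂_k·…·f_q), where f̂_k means that the factor f_k is omitted. Then the sequence 0 → S^q E → S^q F →^d G ⊗ S^{q−1} F is exact; that is, the map S^q E → S^q F induced by the inclusion E ⊆ F is injective and its image equals the kernel of d. -/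
open scoped TensorProduct

/-- The submodule of relations defining the `q`-th symmetric power of a module:
the span of the differences of a pure tensor and any of its permutations. -/
noncomputable def symPowRel (R : Type*) [CommRing R] (M : Type*) [AddCommGroup M]
    [Module R M] (q : ℕ) : Submodule R (⨂[R]^q M) :=
  Submodule.span R
    {x | ∃ (v : Fin q → M) (σ : Equiv.Perm (Fin q)),
      x = PiTensorProduct.tprod R v - PiTensorProduct.tprod R (fun j => v (σ j))}

/-- The `q`-th symmetric power of an `R`-module `M`: the quotient of the `q`-fold
tensor power by the relations identifying permuted tensors. -/
abbrev SymPow (R : Type*) [CommRing R] (M : Type*) [AddCommGroup M] [Module R M]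
    (q : ℕ) : Type _ :=
  (⨂[R]^q M) ⧸ symPowRel R M q

/-- The product `v 0 · v 1 · … · v (q-1)` in the `q`-th symmetric power, i.e. the class
of the pure tensor `v 0 ⊗ ⋯ ⊗ v (q-1)`. -/
noncomputable def symPowMk (R : Type*) [CommRing R] {M : Type*} [AddCommGroup M]
    [Module R M] (q : ℕ) (v : Fin q → M) : SymPow R M q :=
  Submodule.Quotient.mk (PiTensorProduct.tprod R v)

/-!
Choose a section `s` of `φ` and let `t = s ∘ φ`, an idempotent with kernel `E`. Contracting the
`G`-factor against `s`, i.e. `g ⊗ m ↦ s(g) · m`, after `d` gives the derivation `D_t` of the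
symmetric algebra extending `t`. A monomial with `b` factors in the image of `t` and the others
in `E` is an eigenvector of `D_t` with eigenvalue `b`, and such monomials span `S^q F`. Since
`1, …, q` are invertible in `R`, the kernel of `D_t`, and a fortiori that of `d`, is spanned by
monomials in `E`. A retraction of `E → F` gives injectivity.
-/

open PiTensorProduct Function

section SymPow

variable {R : Type*} [CommRing R] {M N : Type*} [AddCommGroup M] [Module R M]
  [AddCommGroup N] [Module R N]

variable (R M) in
noncomputable def symPowMkMultilinear (q : ℕ) :
    MultilinearMap R (fun _ : Fin q => M) (SymPow R M q) :=
  (symPowRel R M q).mkQ.compMultilinearMap (tprod R)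

@[simp]
lemma symPowMkMultilinear_apply (q : ℕ) (v : Fin q → M) :
    symPowMkMultilinear R M q v = symPowMk R q v :=
  rfl

lemma span_range_symPowMk (q : ℕ) :
    Submodule.span R (Set.range (symPowMk R (M := M) q)) = ⊤ := by
  rw [show Set.range (symPowMk R (M := M) q) = (symPowRel R M q).mkQ '' Set.range (tprod R) by
      simp only [← Set.range_comp]; rfl,
    ← Submodule.map_span, span_tprod_eq_top, Submodule.map_top, Submodule.range_mkQ]

lemma SymPow.linearMap_ext {q : ℕ} {f g : SymPow R M q →ₗ[R] N}
    (h : ∀ v, f (symPowMk R q v) = g (symPowMk R q v)) : f = g :=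
  LinearMap.ext_on (span_range_symPowMk q) (Set.forall_mem_range.mpr h)

lemma symPowMk_comp_perm (q : ℕ) (v : Fin q → M) (σ : Equiv.Perm (Fin q)) :
    symPowMk R q (v ∘ σ) = symPowMk R q v :=
  ((Submodule.Quotient.eq (symPowRel R M q)).mpr (Submodule.subset_span ⟨v, σ, rfl⟩)).symm

noncomputable def SymPow.lift {q : ℕ} (f : MultilinearMap R (fun _ : Fin q => M) N)
    (hf : ∀ v (σ : Equiv.Perm (Fin q)), f (v ∘ σ) = f v) : SymPow R M q →ₗ[R] N :=
  (symPowRel R M q).liftQ (PiTensorProduct.lift f) <| Submodule.span_le.mpr <| by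
    rintro _ ⟨v, σ, rfl⟩
    simp only [SetLike.mem_coe, LinearMap.mem_ker, map_sub, lift.tprod, sub_eq_zero]
    exact (hf v σ).symm

@[simp]
lemma SymPow.lift_mk {q : ℕ} (f : MultilinearMap R (fun _ : Fin q => M) N) (hf) (v : Fin q → M) :
    SymPow.lift f hf (symPowMk R q v) = f v :=
  PiTensorProduct.lift.tprod v

noncomputable def symPowMap (f : M →ₗ[R] N) (q : ℕ) : SymPow R M q →ₗ[R] SymPow R N q :=
  SymPow.lift ((symPowMkMultilinear R N q).compLinearMap fun _ => f)
    fun v σ => by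
      simp only [MultilinearMap.compLinearMap_apply, symPowMkMultilinear_apply]
      exact symPowMk_comp_perm q (f ∘ v) σ

@[simp]
lemma symPowMap_mk (f : M →ₗ[R] N) (q : ℕ) (v : Fin q → M) :
    symPowMap f q (symPowMk R q v) = symPowMk R q (f ∘ v) := by
  rw [symPowMap, SymPow.lift_mk]
  rfl

lemma symPowMap_comp_eq_id {f : M →ₗ[R] N} {g : N →ₗ[R] M} (h : g ∘ₗ f = LinearMap.id) (q : ℕ) :
    symPowMap g q ∘ₗ symPowMap f q = LinearMap.id :=
  SymPow.linearMap_ext fun v => by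
    rw [LinearMap.comp_apply, symPowMap_mk, symPowMap_mk, LinearMap.id_apply]
    exact congrArg _ (funext fun k => LinearMap.congr_fun h (v k))

end SymPow

section Derivation

variable {R : Type*} [CommRing R] {M : Type*} [AddCommGroup M] [Module R M]

lemma update_id_apply_eq_update {ι : Type*} [DecidableEq ι] (u : Module.End R M) (k : ι)
    (w : ι → M) : (fun j => update (fun _ => LinearMap.id) k u j (w j)) = update w k (u (w k)) := by
  ext j; rcases eq_or_ne j k with rfl | h <;> simp [*]

/-- The derivation of the symmetric algebra extending `u`, in degree `q`. -/
noncomputable def symPowDeriv (u : Module.End R M) (q : ℕ) : Module.End R (SymPow R M q) :=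
  SymPow.lift
    (∑ k, (symPowMkMultilinear R M q).compLinearMap (update (fun _ => LinearMap.id) k u))
    fun v σ => by
      simp only [sum_apply, MultilinearMap.compLinearMap_apply, symPowMkMultilinear_apply,
        update_id_apply_eq_update]
      refine (Finset.sum_congr rfl fun k _ => ?_).trans (Equiv.sum_comp σ _)
      rw [comp_apply, ← σ.symm_apply_apply k, ← update_comp_equiv, symPowMk_comp_perm,
        σ.apply_symm_apply]

lemma symPowDeriv_mk (u : Module.End R M) (q : ℕ) (v : Fin q → M) :
    symPowDeriv u q (symPowMk R q v) = ∑ k, symPowMk R q (update v k (u (v k))) := by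
  simp only [symPowDeriv, SymPow.lift_mk, sum_apply, MultilinearMap.compLinearMap_apply,
    symPowMkMultilinear_apply, update_id_apply_eq_update]

noncomputable def symPowMul (q : ℕ) : M →ₗ[R] SymPow R M q →ₗ[R] SymPow R M (q + 1) where
  toFun x := SymPow.lift ((symPowMkMultilinear R M (q + 1)).curryLeft x) fun v σ => by
    simp only [MultilinearMap.curryLeft_apply, symPowMkMultilinear_apply]
    have hcons : (Fin.cons x (v ∘ σ) : Fin (q + 1) → M)
        = Fin.cons x v ∘ Equiv.Perm.decomposeFin.symm (0, σ) := by
      ext j; cases j using Fin.cases <;> simp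
    rw [hcons, symPowMk_comp_perm]
  map_add' x y := SymPow.linearMap_ext fun v => by simp
  map_smul' c x := SymPow.linearMap_ext fun v => by simp

@[simp]
lemma symPowMul_mk (q : ℕ) (x : M) (v : Fin q → M) :
    symPowMul q x (symPowMk R q v) = symPowMk R (q + 1) (Fin.cons x v) := by
  simp [symPowMul]

lemma symPowMul_mk_removeNth (q : ℕ) (v : Fin (q + 1) → M) (k : Fin (q + 1)) (x : M) :
    symPowMul q x (symPowMk R q (k.removeNth v)) = symPowMk R (q + 1) (update v k x) := by
  rw [symPowMul_mk, ← Fin.insertNth_comp_cycleRange_symm, symPowMk_comp_perm,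
    Fin.insertNth_removeNth]

end Derivation

lemma mem_of_mem_sup_eigen_of_apply_eq_zero {R M : Type*} [CommRing R] [Algebra ℚ R]
    [AddCommGroup M] [Module R M] (T : Module.End R M) (V : ℕ → Submodule R M)
    (hV : ∀ b, ∀ x ∈ V b, T x = (b : R) • x) (m : ℕ) {x : M}
    (hx : x ∈ (Finset.range (m + 1)).sup V) (hTx : T x = 0) : x ∈ V 0 := by
  induction m generalizing x with
  | zero => simpa using hx
  | succ m ih =>
    set W := (Finset.range (m + 1)).sup V
    have hW : W ≤ W.comap T := Finset.sup_le fun b hb y hy => by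
      rw [Submodule.mem_comap, hV b y hy]
      exact W.smul_mem _ (Finset.le_sup (f := V) hb hy)
    rw [Finset.range_add_one, Finset.sup_insert] at hx
    obtain ⟨z, hz, y, hy, rfl⟩ := Submodule.mem_sup.mp hx
    have hz' : ((m + 1 : ℕ) : R) • z = -T y := by
      rw [← hV _ z hz]
      exact eq_neg_of_add_eq_zero_left (by rwa [map_add] at hTx)
    have hunit : IsUnit ((m + 1 : ℕ) : R) := by
      have hQ : ((m + 1 : ℕ) : ℚ) ≠ 0 := Nat.cast_ne_zero.mpr m.succ_ne_zero
      simpa using (isUnit_iff_ne_zero.mpr hQ).map (algebraMap ℚ R)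
    have hzW : z ∈ W := by
      rw [← W.smul_mem_iff_of_isUnit hunit, hz']
      exact W.neg_mem (hW hy)
    exact ih (W.add_mem hzW hy) hTx

section WeightSpace

variable {R : Type*} [CommRing R] {M N : Type*} [AddCommGroup M] [Module R M]
  [AddCommGroup N] [Module R N] (t : Module.End R M)

noncomputable def symPowWeightSpace (q b : ℕ) : Submodule R (SymPow R M q) :=
  Submodule.span R {x | ∃ (v : Fin q → M) (K : Finset (Fin q)), K.card = b ∧
    (∀ k, t (v k) = if k ∈ K then v k else 0) ∧ symPowMk R q v = x}

lemma symPowDeriv_apply_of_mem_weightSpace {q b : ℕ} {x : SymPow R M q}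
    (hx : x ∈ symPowWeightSpace t q b) : symPowDeriv t q x = (b : R) • x := by
  induction hx using Submodule.span_induction with
  | mem x hx =>
    obtain ⟨v, K, rfl, hv, rfl⟩ := hx
    have hterm : ∀ k, symPowMk R q (update v k (t (v k)))
        = if k ∈ K then symPowMk R q v else 0 := by
      intro k
      rw [hv k]
      split_ifs
      · rw [update_eq_self]
      · exact (symPowMkMultilinear R M q).map_update_zero v k
    simp [symPowDeriv_mk, hterm, Finset.sum_ite_mem, Nat.cast_smul_eq_nsmul]
  | zero => simp
  | add x y _ _ hx hy => rw [map_add, hx, hy, smul_add]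
  | smul c x _ hx => rw [map_smul, hx, smul_comm]

lemma sup_symPowWeightSpace_eq_top (ht : IsIdempotentElem t) (q : ℕ) :
    (Finset.range (q + 1)).sup (symPowWeightSpace t q) = ⊤ := by
  have htt : ∀ y, t (t y) = t y := LinearMap.congr_fun ht
  rw [eq_top_iff, ← span_range_symPowMk, Submodule.span_le]
  rintro _ ⟨v, rfl⟩
  have hv : v = (fun k => v k - t (v k)) + fun k => t (v k) := by ext; simp
  rw [SetLike.mem_coe, ← symPowMkMultilinear_apply, hv, MultilinearMap.map_add_univ]
  refine Submodule.sum_mem _ fun s _ => ?_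
  have hcard : sᶜ.card ∈ Finset.range (q + 1) :=
    Finset.mem_range_succ_iff.mpr (sᶜ.card_le_univ.trans_eq (Fintype.card_fin q))
  refine Finset.le_sup (f := symPowWeightSpace t q) hcard
    (Submodule.subset_span ⟨_, sᶜ, rfl, fun k => ?_, rfl⟩)
  by_cases hk : k ∈ s <;> simp [hk, htt]

lemma symPowWeightSpace_zero_le_range {f : N →ₗ[R] M}
    (h : LinearMap.ker t ≤ LinearMap.range f) (q : ℕ) :
    symPowWeightSpace t q 0 ≤ LinearMap.range (symPowMap f q) := by
  rw [symPowWeightSpace, Submodule.span_le]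
  rintro _ ⟨v, K, hK, hv, rfl⟩
  obtain rfl := Finset.card_eq_zero.mp hK
  choose u hu using fun k => h (show v k ∈ LinearMap.ker t by simpa using hv k)
  exact ⟨symPowMk R q u, by rw [symPowMap_mk]; congr 1; ext k; exact hu k⟩

theorem ker_symPowDeriv_le_range_symPowMap [Algebra ℚ R] (ht : IsIdempotentElem t)
    {f : N →ₗ[R] M} (h : LinearMap.ker t ≤ LinearMap.range f) (q : ℕ) :
    LinearMap.ker (symPowDeriv t q) ≤ LinearMap.range (symPowMap f q) := fun x hx =>
  symPowWeightSpace_zero_le_range t h q <|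
    mem_of_mem_sup_eigen_of_apply_eq_zero _ _
      (fun _ _ => symPowDeriv_apply_of_mem_weightSpace t) q
      (by rw [sup_symPowWeightSpace_eq_top t ht]; trivial) hx

end WeightSpace

lemma lift_symPowMul_comp_eq_symPowDeriv {R M N : Type*} [CommRing R] [AddCommGroup M]
    [Module R M] [AddCommGroup N] [Module R N] {φ : M →ₗ[R] N} (s : N →ₗ[R] M) (q : ℕ)
    (d : SymPow R M (q + 1) →ₗ[R] N ⊗[R] SymPow R M q)
    (hd : ∀ v : Fin (q + 1) → M, d (symPowMk R (q + 1) v) =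
      ∑ k : Fin (q + 1), φ (v k) ⊗ₜ[R] symPowMk R q (fun l => v (k.succAbove l))) :
    TensorProduct.lift (symPowMul q ∘ₗ s) ∘ₗ d = symPowDeriv (s ∘ₗ φ) (q + 1) :=
  SymPow.linearMap_ext fun v => by
    simp only [LinearMap.comp_apply, hd, map_sum, TensorProduct.lift.tmul, symPowDeriv_mk]
    exact Finset.sum_congr rfl fun k _ => symPowMul_mk_removeNth q v k _

/--
Let `R` be a commutative ring containing `ℚ` and let `0 → E →^i F →^φ G → 0` be a split
short exact sequence of `R`-modules. For `q = n+1 ≥ 1`, let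
`d : S^q F → G ⊗ S^{q−1} F` be the linear map determined by
`d (f₀·…·f_n) = Σ_k φ (f_k) ⊗ (f₀·…·f̂_k·…·f_n)`. Then the sequence
`0 → S^q E → S^q F →^d G ⊗ S^{q−1} F` is exact: the map `S^q E → S^q F` induced by
the inclusion is injective and its image equals the kernel of `d`.
-/
theorem stmt6 {R E F G : Type*} [CommRing R] [Algebra ℚ R]
    [AddCommGroup E] [AddCommGroup F] [AddCommGroup G]
    [Module R E] [Module R F] [Module R G]
    (i : E →ₗ[R] F) (φ : F →ₗ[R] G)
    (hinj : Function.Injective i) (hsurj : Function.Surjective φ)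
    (hexact : LinearMap.range i = LinearMap.ker φ)
    (hsplit : ∃ C : Submodule R F, IsCompl (LinearMap.range i) C)
    (n : ℕ)
    (j : SymPow R E (n + 1) →ₗ[R] SymPow R F (n + 1))
    (hj : ∀ v : Fin (n + 1) → E,
      j (symPowMk R (n + 1) v) = symPowMk R (n + 1) (fun k => i (v k)))
    (d : SymPow R F (n + 1) →ₗ[R] G ⊗[R] SymPow R F n)
    (hd : ∀ v : Fin (n + 1) → F,
      d (symPowMk R (n + 1) v) =
        ∑ k : Fin (n + 1), φ (v k) ⊗ₜ[R] symPowMk R n (fun l => v (k.succAbove l))) :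
    Function.Injective j ∧ LinearMap.range j = LinearMap.ker d := by
  obtain ⟨C, hC⟩ := hsplit
  have hr : LinearMap.linearProjOfIsCompl C i hinj hC ∘ₗ i = LinearMap.id :=
    LinearMap.ext (LinearMap.linearProjOfIsCompl_apply_left C i hinj hC)
  have hex : Function.Exact i φ := LinearMap.exact_iff.mpr hexact.symm
  obtain ⟨s, hs⟩ := (hex.splitSurjectiveEquiv hinj).symm (hex.splitInjectiveEquiv hsurj ⟨_, hr⟩)
  obtain rfl : j = symPowMap i (n + 1) :=
    SymPow.linearMap_ext fun v => (hj v).trans (symPowMap_mk i (n + 1) v).symm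
  have hφi : φ ∘ₗ i = 0 := LinearMap.range_le_ker_iff.mp hexact.le
  have hdj : d ∘ₗ symPowMap i (n + 1) = 0 := SymPow.linearMap_ext fun v => by
    simp [hd, ← LinearMap.comp_apply φ i, hφi]
  have ht : IsIdempotentElem (s ∘ₗ φ) := by
    change (s ∘ₗ φ) ∘ₗ (s ∘ₗ φ) = s ∘ₗ φ
    rw [LinearMap.comp_assoc, ← LinearMap.comp_assoc φ s φ, hs, LinearMap.id_comp]
  have hker : LinearMap.ker (s ∘ₗ φ) = LinearMap.range i := by
    rw [LinearMap.ker_comp_of_ker_eq_bot _ (LinearMap.ker_eq_bot.mpr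
      (LinearMap.injective_of_comp_eq_id s φ hs)), hexact]
  refine ⟨LinearMap.injective_of_comp_eq_id _ _ (symPowMap_comp_eq_id hr _),
    le_antisymm (LinearMap.range_le_ker_iff.mpr hdj) ?_⟩
  calc LinearMap.ker d
      ≤ LinearMap.ker (TensorProduct.lift (symPowMul n ∘ₗ s) ∘ₗ d) := LinearMap.ker_le_ker_comp _ _
    _ = LinearMap.ker (symPowDeriv (s ∘ₗ φ) (n + 1)) := by
      rw [lift_symPowMul_comp_eq_symPowDeriv s n d hd]
    _ ≤ LinearMap.range (symPowMap i (n + 1)) :=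
      ker_symPowDeriv_le_range_symPowMap _ ht hker.le _
end

section
/- Let K be a field of characteristic 0 and R = K[X, Y, Z]. Set f₁ = X⁶ − Y⁴Z², f₂ = Y⁶ − X²Z⁴, f₃ = X⁴Y² − Z⁶, f₄ = X²Y⁴, f₅ = Y²Z⁴, f₆ = X⁴Z², f₇ = X²Y²Z². If s₁, …, s₇ ∈ R are polynomials of total degree at most 1 satisfying s₁f₁ + s₂f₂ + ⋯ + s₇f₇ = 0, then s₁ = s₂ = ⋯ = s₇ = 0. -/
/-!
All seven sextics are polynomials in `X², Y², Z²`, so multiplying them by `1`, `X`, `Y` or `Z`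
produces monomials in four disjoint parity classes of exponents. Hence a syzygy
`∑ sᵢ fᵢ = 0` with `deg sᵢ ≤ 1` splits into four `K`-linear relations `∑ cᵢ fᵢ = 0`, one for each
coefficient of the `sᵢ`. The sextics are linearly independent, since each has a monomial that
occurs in no other one, so all these coefficients vanish.
-/

open MvPolynomial

namespace MvPolynomial

variable {σ R : Type*}

def evenExponents (σ : Type*) : Set (σ →₀ ℕ) := {d | ∀ k, Even (d k)}

theorem eq_of_add_eq_add_of_degree_le_one {d e m n : σ →₀ ℕ} (hd : d.degree ≤ 1)
    (he : e.degree ≤ 1) (hm : m ∈ evenExponents σ) (hn : n ∈ evenExponents σ)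
    (h : d + m = e + n) : d = e := by
  ext k
  have hk := congr($h k)
  have hdk := Finsupp.le_degree k d
  have hek := Finsupp.le_degree k e
  obtain ⟨a, ha⟩ := hm k
  obtain ⟨b, hb⟩ := hn k
  simp only [Finsupp.coe_add, Pi.add_apply] at hk
  omega

theorem coeff_add_mul_of_totalDegree_le_one [CommSemiring R] {p f : MvPolynomial σ R}
    (hp : p.totalDegree ≤ 1) (hf : f ∈ restrictSupport R (evenExponents σ))
    {d m : σ →₀ ℕ} (hd : d.degree ≤ 1) (hm : m ∈ evenExponents σ) :
    coeff (d + m) (p * f) = coeff d p * coeff m f := by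
  classical
  rw [coeff_mul, Finset.sum_eq_single (d, m)]
  · rintro ⟨e, n⟩ hen hne
    by_contra hne0
    have he : e ∈ p.support := mem_support_iff.2 (left_ne_zero_of_mul hne0)
    have hn : n ∈ f.support := mem_support_iff.2 (right_ne_zero_of_mul hne0)
    have hed : d = e :=
      eq_of_add_eq_add_of_degree_le_one hd ((le_totalDegree he).trans hp) hm (hf hn)
        (Finset.HasAntidiagonal.mem_antidiagonal.1 hen).symm
    subst hed
    exact hne (by simpa using (Finset.HasAntidiagonal.mem_antidiagonal.1 hen))
  · simp

theorem eq_zero_of_sum_mul_eq_zero_of_totalDegree_le_one [CommRing R] {ι : Type*} [Fintype ι]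
    {f : ι → MvPolynomial σ R} (hf_even : ∀ i, f i ∈ restrictSupport R (evenExponents σ))
    (hf : LinearIndependent R f) {s : ι → MvPolynomial σ R} (hs : ∀ i, (s i).totalDegree ≤ 1)
    (hrel : ∑ i, s i * f i = 0) (i : ι) : s i = 0 := by
  ext d
  rw [coeff_zero]
  by_cases hd : d.degree ≤ 1
  · suffices ∑ j, coeff d (s j) • f j = 0 from Fintype.linearIndependent_iff.1 hf _ this i
    ext m
    simp only [coeff_sum, coeff_smul, smul_eq_mul, coeff_zero]
    by_cases hm : m ∈ evenExponents σ
    · simp only [← coeff_add_mul_of_totalDegree_le_one (hs _) (hf_even _) hd hm, ← coeff_sum,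
        hrel, coeff_zero]
    · refine Finset.sum_eq_zero fun j _ => ?_
      have : m ∉ (f j).support := fun h => hm (hf_even j h)
      rw [notMem_support_iff.1 this, mul_zero]
  · exact coeff_eq_zero_of_totalDegree_lt ((hs i).trans_lt (not_le.1 hd))

end MvPolynomial

noncomputable def exponent (a b c : ℕ) : Fin 3 →₀ ℕ := Finsupp.equivFunOnFinite.symm ![a, b, c]

@[simp] theorem exponent_inj {a b c a' b' c' : ℕ} :
    exponent a b c = exponent a' b' c' ↔ a = a' ∧ b = b' ∧ c = c' := by
  simp [exponent]

@[simp] theorem exponent_mem_evenExponents {a b c : ℕ} :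
    exponent a b c ∈ evenExponents (Fin 3) ↔ Even a ∧ Even b ∧ Even c := by
  simp [exponent, evenExponents, Fin.forall_fin_succ]

theorem X_pow_mul_X_pow_mul_X_pow {R : Type*} [CommSemiring R] (a b c : ℕ) :
    (X 0 ^ a * X 1 ^ b * X 2 ^ c : MvPolynomial (Fin 3) R) = monomial (exponent a b c) 1 := by
  have : exponent a b c = Finsupp.single 0 a + Finsupp.single 1 b + Finsupp.single 2 c := by
    ext k; fin_cases k <;> simp [exponent]
  simp [this, X_pow_eq_monomial, monomial_mul]

section Sextics

variable {K : Type*} [Field K]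

noncomputable def sextic : Fin 7 → MvPolynomial (Fin 3) K :=
  ![X 0 ^ 6 - X 1 ^ 4 * X 2 ^ 2, X 1 ^ 6 - X 0 ^ 2 * X 2 ^ 4,
      X 0 ^ 4 * X 1 ^ 2 - X 2 ^ 6, X 0 ^ 2 * X 1 ^ 4, X 1 ^ 2 * X 2 ^ 4,
      X 0 ^ 4 * X 2 ^ 2, X 0 ^ 2 * X 1 ^ 2 * X 2 ^ 2]

theorem sextic_eq : sextic (K := K) =
    ![monomial (exponent 6 0 0) 1 - monomial (exponent 0 4 2) 1,
      monomial (exponent 0 6 0) 1 - monomial (exponent 2 0 4) 1,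
      monomial (exponent 4 2 0) 1 - monomial (exponent 0 0 6) 1,
      monomial (exponent 2 4 0) 1, monomial (exponent 0 2 4) 1,
      monomial (exponent 4 0 2) 1, monomial (exponent 2 2 2) 1] := by
  simp only [sextic, ← X_pow_mul_X_pow_mul_X_pow, pow_zero, mul_one, one_mul]

theorem sextic_mem_restrictSupport (i : Fin 7) :
    sextic i ∈ restrictSupport K (evenExponents (Fin 3)) := by
  rw [sextic_eq]
  fin_cases i <;> simp [Submodule.sub_mem, Nat.even_iff]

theorem linearIndependent_sextic : LinearIndependent K (sextic (K := K)) := by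
  refine Fintype.linearIndependent_iff.2 fun g hg i => ?_
  have hcoeff := congr_arg (coeff (![exponent 6 0 0, exponent 0 6 0, exponent 4 2 0,
    exponent 2 4 0, exponent 0 2 4, exponent 4 0 2, exponent 2 2 2] i)) hg
  fin_cases i <;> simpa [sextic_eq, Fin.sum_univ_seven, coeff_monomial] using hcoeff

end Sextics

theorem stmt10_general {K : Type*} [Field K]
    (f : Fin 7 → MvPolynomial (Fin 3) K)
    (hf : f = ![X 0 ^ 6 - X 1 ^ 4 * X 2 ^ 2, X 1 ^ 6 - X 0 ^ 2 * X 2 ^ 4,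
      X 0 ^ 4 * X 1 ^ 2 - X 2 ^ 6, X 0 ^ 2 * X 1 ^ 4, X 1 ^ 2 * X 2 ^ 4,
      X 0 ^ 4 * X 2 ^ 2, X 0 ^ 2 * X 1 ^ 2 * X 2 ^ 2])
    (s : Fin 7 → MvPolynomial (Fin 3) K)
    (hdeg : ∀ i, (s i).totalDegree ≤ 1)
    (hrel : ∑ i, s i * f i = 0) :
    ∀ i, s i = 0 := by
  subst hf
  exact eq_zero_of_sum_mul_eq_zero_of_totalDegree_le_one sextic_mem_restrictSupport
    linearIndependent_sextic hdeg hrel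

/--
Let `K` be a field of characteristic `0`, `R = K[X, Y, Z]`, and
`f₁ = X⁶ − Y⁴Z², f₂ = Y⁶ − X²Z⁴, f₃ = X⁴Y² − Z⁶, f₄ = X²Y⁴, f₅ = Y²Z⁴, f₆ = X⁴Z²,
f₇ = X²Y²Z²`. If `s₁, …, s₇ ∈ R` have total degree at most `1` and satisfy
`s₁f₁ + ⋯ + s₇f₇ = 0`, then `s₁ = ⋯ = s₇ = 0`.
-/
theorem stmt10 {K : Type*} [Field K] [CharZero K]
    (f : Fin 7 → MvPolynomial (Fin 3) K)
    (hf : f = ![X 0 ^ 6 - X 1 ^ 4 * X 2 ^ 2, X 1 ^ 6 - X 0 ^ 2 * X 2 ^ 4,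
      X 0 ^ 4 * X 1 ^ 2 - X 2 ^ 6, X 0 ^ 2 * X 1 ^ 4, X 1 ^ 2 * X 2 ^ 4,
      X 0 ^ 4 * X 2 ^ 2, X 0 ^ 2 * X 1 ^ 2 * X 2 ^ 2])
    (s : Fin 7 → MvPolynomial (Fin 3) K)
    (hdeg : ∀ i, (s i).totalDegree ≤ 1)
    (hrel : ∑ i, s i * f i = 0) :
    ∀ i, s i = 0 :=
  stmt10_general f hf s hdeg hrel
end

section
/- Let p ≥ 3 be a prime number, let K be a field of characteristic p, and let F = X^{3p−1} + Y^{3p−1} + Z^{3p−1} + X^p·Z^{2p−1} ∈ K[X, Y, Z]. Then: (a) the polynomial identity X^{2p}·(Z·X^{p−1}) + Y^{2p}·(Z·Y^{p−1}) + Z^{2p}·(Z^p + X^p) = Z·F holds in K[X, Y, Z]; and (b) the only common zero in K³ of the four polynomials F, Z·X^{p−1}, Z·Y^{p−1} and Z^p + X^p is (0, 0, 0). -/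
open MvPolynomial

/-!
At a common zero, `z ≠ 0` is impossible: `z x^{p-1} = 0` would give `x = 0` and then
`z^p + x^p = 0` would give `z = 0`. So `z = 0`, whence `x^p = 0`, and `F(0, y, 0) = y^{3p-1}`
gives `y = 0`.
-/

theorem syzygy_identity {R : Type*} [CommSemiring R] {p : ℕ} (hp : p ≠ 0) (x y z : R) :
    x ^ (2 * p) * (z * x ^ (p - 1)) + y ^ (2 * p) * (z * y ^ (p - 1)) +
        z ^ (2 * p) * (z ^ p + x ^ p) =
      z * (x ^ (3 * p - 1) + y ^ (3 * p - 1) + z ^ (3 * p - 1) + x ^ p * z ^ (2 * p - 1)) := by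
  obtain ⟨n, rfl⟩ := Nat.exists_eq_add_one_of_ne_zero hp
  rw [show 3 * (n + 1) - 1 = 3 * n + 2 by omega, show 2 * (n + 1) - 1 = 2 * n + 1 by omega,
    Nat.add_sub_cancel]
  ring

theorem eq_zero_of_common_zero {R : Type*} [CommSemiring R] [NoZeroDivisors R] {p : ℕ}
    (hp : 2 ≤ p) {x y z : R}
    (hF : x ^ (3 * p - 1) + y ^ (3 * p - 1) + z ^ (3 * p - 1) + x ^ p * z ^ (2 * p - 1) = 0)
    (hx : z * x ^ (p - 1) = 0) (hzx : z ^ p + x ^ p = 0) :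
    x = 0 ∧ y = 0 ∧ z = 0 := by
  have hz : z = 0 := by
    by_contra hz
    have hx0 : x = 0 := pow_eq_zero_iff (by omega) |>.mp ((mul_eq_zero.mp hx).resolve_left hz)
    rw [hx0, zero_pow (by omega), add_zero] at hzx
    exact hz (pow_eq_zero_iff (by omega) |>.mp hzx)
  subst hz
  rw [zero_pow (by omega), zero_add] at hzx
  have hx0 : x = 0 := pow_eq_zero_iff (by omega) |>.mp hzx
  subst hx0
  have hy0 : y ^ (3 * p - 1) = 0 := by
    simpa [zero_pow, show 3 * p - 1 ≠ 0 by omega, show p ≠ 0 by omega] using hF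
  exact ⟨rfl, pow_eq_zero_iff (by omega) |>.mp hy0, rfl⟩

theorem stmt12_general (p : ℕ) (hp3 : 3 ≤ p)
    {K : Type*} [Field K]
    (F : MvPolynomial (Fin 3) K)
    (hF : F = X 0 ^ (3 * p - 1) + X 1 ^ (3 * p - 1) + X 2 ^ (3 * p - 1) +
      X 0 ^ p * X 2 ^ (2 * p - 1)) :
    (X 0 ^ (2 * p) * (X 2 * X 0 ^ (p - 1)) + X 1 ^ (2 * p) * (X 2 * X 1 ^ (p - 1)) +
        X 2 ^ (2 * p) * (X 2 ^ p + X 0 ^ p) = X 2 * F) ∧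
      {v : Fin 3 → K | eval v F = 0 ∧ eval v (X 2 * X 0 ^ (p - 1)) = 0 ∧
        eval v (X 2 * X 1 ^ (p - 1)) = 0 ∧ eval v (X 2 ^ p + X 0 ^ p) = 0} = {0} := by
  subst hF
  refine ⟨syzygy_identity (by omega) _ _ _, ?_⟩
  ext v
  simp only [Set.mem_ofPred_eq, Set.mem_singleton_iff, map_add, map_mul, map_pow, eval_X]
  constructor
  · rintro ⟨hFv, hx, -, hzx⟩
    obtain ⟨h0, h1, h2⟩ := eq_zero_of_common_zero (by omega) hFv hx hzx
    ext i
    fin_cases i <;> assumption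
  · rintro rfl
    simp [zero_pow, show 3 * p - 1 ≠ 0 by omega, show 2 * p - 1 ≠ 0 by omega,
      show p - 1 ≠ 0 by omega, show p ≠ 0 by omega]

/--
Let `p ≥ 3` be prime, `K` a field of characteristic `p`, and
`F = X^{3p−1} + Y^{3p−1} + Z^{3p−1} + X^p·Z^{2p−1} ∈ K[X, Y, Z]`. Then:
(a) `X^{2p}·(Z·X^{p−1}) + Y^{2p}·(Z·Y^{p−1}) + Z^{2p}·(Z^p + X^p) = Z·F` in `K[X, Y, Z]`;
(b) the only common zero in `K³` of `F`, `Z·X^{p−1}`, `Z·Y^{p−1}` and `Z^p + X^p`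
is `(0, 0, 0)`.
-/
theorem stmt12 (p : ℕ) (hp : p.Prime) (hp3 : 3 ≤ p)
    {K : Type*} [Field K] [CharP K p]
    (F : MvPolynomial (Fin 3) K)
    (hF : F = X 0 ^ (3 * p - 1) + X 1 ^ (3 * p - 1) + X 2 ^ (3 * p - 1) +
      X 0 ^ p * X 2 ^ (2 * p - 1)) :
    (X 0 ^ (2 * p) * (X 2 * X 0 ^ (p - 1)) + X 1 ^ (2 * p) * (X 2 * X 1 ^ (p - 1)) +
        X 2 ^ (2 * p) * (X 2 ^ p + X 0 ^ p) = X 2 * F) ∧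
      {v : Fin 3 → K | eval v F = 0 ∧ eval v (X 2 * X 0 ^ (p - 1)) = 0 ∧
        eval v (X 2 * X 1 ^ (p - 1)) = 0 ∧ eval v (X 2 ^ p + X 0 ^ p) = 0} = {0} :=
  stmt12_general p hp3 F hF
end

section
/- Let K be a field and R = K[X, Y, Z]. Then the radical of the ideal I = (X² − Y², X² − Z², XY, XZ, YZ) of R equals the irrelevant maximal ideal (X, Y, Z); in particular X³, Y³, Z³ ∈ I and I is (X, Y, Z)-primary. -/
/-!
From `x² − y², xy ∈ I` one gets `x³ = x(x² − y²) + y·xy ∈ I` and `y³ = x·xy − y(x² − y²) ∈ I`,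
so every variable lies in `√I`. All generators of `I` have zero constant term, so
`I ⊆ (X, Y, Z) = ker constantCoeff`, a maximal ideal; hence `√I = (X, Y, Z)`, and an ideal
with maximal radical is primary.
-/

open MvPolynomial

namespace MvPolynomial

theorem idealOfVars_eq_ker_constantCoeff {σ R : Type*} [CommSemiring R] :
    idealOfVars σ R = RingHom.ker (constantCoeff (σ := σ) (R := R)) := by
  ext p
  rw [← pow_one (idealOfVars σ R), mem_pow_idealOfVars_iff', RingHom.mem_ker]
  simp [constantCoeff, Finsupp.degree_eq_zero_iff]

theorem isMaximal_idealOfVars (σ K : Type*) [Field K] : (idealOfVars σ K).IsMaximal := by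
  rw [idealOfVars_eq_ker_constantCoeff]
  exact RingHom.ker_isMaximal_of_surjective _ fun a ↦ ⟨C a, constantCoeff_C _ a⟩

theorem idealOfVars_fin_three {R : Type*} [CommSemiring R] :
    idealOfVars (Fin 3) R = Ideal.span {X 0, X 1, X 2} := by
  rw [idealOfVars]
  congr 1
  ext p
  simp [Fin.exists_fin_succ, eq_comm]

end MvPolynomial

theorem Ideal.pow_three_mem_of_sq_sub_sq_mem_of_mul_mem {R : Type*} [CommRing R] {I : Ideal R}
    {a b : R} (hsq : a ^ 2 - b ^ 2 ∈ I) (hmul : a * b ∈ I) : a ^ 3 ∈ I ∧ b ^ 3 ∈ I := by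
  constructor
  · rw [show a ^ 3 = a * (a ^ 2 - b ^ 2) + b * (a * b) by ring]
    exact add_mem (mul_mem_left I a hsq) (mul_mem_left I b hmul)
  · rw [show b ^ 3 = a * (a * b) - b * (a ^ 2 - b ^ 2) by ring]
    exact sub_mem (mul_mem_left I a hmul) (mul_mem_left I b hsq)

/--
Let `K` be a field and `R = K[X, Y, Z]`. Then the radical of
`I = (X² − Y², X² − Z², XY, XZ, YZ)` equals the irrelevant maximal ideal `(X, Y, Z)`;
in particular `X³, Y³, Z³ ∈ I` and `I` is `(X, Y, Z)`-primary.
-/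
theorem stmt13 {K : Type*} [Field K]
    (I : Ideal (MvPolynomial (Fin 3) K))
    (hI : I = Ideal.span {X 0 ^ 2 - X 1 ^ 2, X 0 ^ 2 - X 2 ^ 2,
      X 0 * X 1, X 0 * X 2, X 1 * X 2}) :
    I.radical = Ideal.span {X 0, X 1, X 2} ∧
      X 0 ^ 3 ∈ I ∧ X 1 ^ 3 ∈ I ∧ X 2 ^ 3 ∈ I ∧ I.IsPrimary := by
  have gen_mem {p} (hp : p ∈ ({X 0 ^ 2 - X 1 ^ 2, X 0 ^ 2 - X 2 ^ 2, X 0 * X 1, X 0 * X 2,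
      X 1 * X 2} : Set (MvPolynomial (Fin 3) K))) : p ∈ I := hI ▸ Ideal.subset_span hp
  obtain ⟨h0, h1⟩ := Ideal.pow_three_mem_of_sq_sub_sq_mem_of_mul_mem (a := X 0) (b := X 1)
    (gen_mem (by simp)) (gen_mem (by simp))
  obtain ⟨-, h2⟩ := Ideal.pow_three_mem_of_sq_sub_sq_mem_of_mul_mem (a := X 0) (b := X 2)
    (gen_mem (by simp)) (gen_mem (by simp))
  have hmax := isMaximal_idealOfVars (Fin 3) K
  rw [idealOfVars_fin_three] at hmax
  have hle : I ≤ Ideal.span {X 0, X 1, X 2} := by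
    rw [← idealOfVars_fin_three, idealOfVars_eq_ker_constantCoeff, hI, Ideal.span_le]
    simp [Set.insert_subset_iff]
  have hge : Ideal.span {X 0, X 1, X 2} ≤ I.radical := by
    simp only [Ideal.span_le, Set.insert_subset_iff, Set.singleton_subset_iff]
    exact ⟨⟨3, h0⟩, ⟨3, h1⟩, ⟨3, h2⟩⟩
  have hrad : I.radical = Ideal.span {X 0, X 1, X 2} :=
    le_antisymm (hmax.isPrime.radical_le_iff.2 hle) hge
  exact ⟨hrad, h0, h1, h2, Ideal.isPrimary_of_isMaximal_radical (hrad ▸ hmax)⟩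
end
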